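/- arXiv:1509.02628 — 2 statements merged into one kernel-verified Lean document; each statement's English description precedes it below -/
import Mathlib

section
/- Let N be a prime with N ≡ 3 (mod 4), let M = (N−1)/2, and let p be a positive integer coprime to N. Define the M×N complex matrix A by A[m, n] = exp(2πi·p·m²·n/N) for m = 1, …, M and n = 1, …, N. Then the coherence of A, namely μ(A) = max over 1 ≤ n ≠ n' ≤ N of (1/M)·|∑_{m=1}^{M} exp(2πi·p·m²·(n−n')/N)|, equals √(M+1)/(√2·M). -/
/-!
For `d ≠ 0` in `ZMod N`, counting square roots turns `∑ₓ ψ(d x²)` into `χ(d)` times the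
quadratic Gauss sum `g`, and `g² = χ(-1) N = -N` because `-1` is a non-square when
`N ≡ 3 (mod 4)`. So the full sum is purely imaginary of modulus `√N`. Pairing `m` with `-m`
writes it as `1 + 2S`, where `S` is the sum over `m = 1, …, M`; hence
`|2S| = |1 + i·(±√N)| = √(N + 1)` for every pair `n ≠ n'`, and all the normalised inner
products equal `√(N + 1) / (2M) = √(M + 1) / (√2 M)`.
-/

open Complex Real
open Finset

theorem Complex.norm_sub_one_of_sq_eq_neg_ofReal {g : ℂ} {r : ℝ} (hr : 0 ≤ r)
    (hg : g ^ 2 = -(r : ℂ)) : ‖g - 1‖ = √(r + 1) := by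
  have hre := congrArg Complex.re hg
  have him := congrArg Complex.im hg
  simp only [sq, mul_re, mul_im, neg_re, neg_im, ofReal_re, ofReal_im, neg_zero] at hre him
  have hg_re : g.re = 0 := mul_self_eq_zero.mp (by nlinarith [sq_nonneg g.im])
  rw [norm_def, normSq_apply, sub_re, sub_im, one_re, one_im, hg_re]
  congr 1
  nlinarith

theorem ZMod.intCast_ne_zero_of_abs_lt {N : ℕ} {a : ℤ} (ha : a ≠ 0) (h : |a| < N) :
    (a : ZMod N) ≠ 0 := fun h0 =>
  ha (Int.eq_zero_of_abs_lt_dvd ((ZMod.intCast_zmod_eq_zero_iff_dvd a N).mp h0) h)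

theorem ZMod.sum_univ_eq_sum_range {R : Type*} [AddCommMonoid R] (N : ℕ) [NeZero N]
    (f : ZMod N → R) : ∑ x, f x = ∑ i ∈ range N, f i :=
  sum_nbij' ZMod.val Nat.cast (fun x _ => by simpa using ZMod.val_lt x)
    (fun _ _ => mem_univ _) (fun x _ => ZMod.natCast_zmod_val x)
    (fun i hi => ZMod.val_natCast_of_lt (by simpa using hi)) (fun x _ => by simp)

theorem ZMod.sum_eq_add_two_nsmul_sum_Icc_of_neg {R : Type*} [AddCommMonoid R] {M N : ℕ}
    [NeZero N] (hN : 2 * M + 1 = N) {f : ZMod N → R} (hf : ∀ x, f (-x) = f x) :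
    ∑ x, f x = f 0 + 2 • ∑ m ∈ Icc 1 M, f m := by
  have hreflect : ∑ j ∈ Ico (M + 1) N, f j = ∑ m ∈ Icc 1 M, f m := by
    have := sum_Ico_reflect (fun j => f j) 1 (by omega : M + 1 ≤ N + 1)
    rw [show N + 1 - (M + 1) = M + 1 by omega, Nat.add_sub_cancel] at this
    rw [← this, ← Ico_add_one_right_eq_Icc]
    refine sum_congr rfl fun m hm => ?_
    rw [Nat.cast_sub (by simp at hm; omega), ZMod.natCast_self, zero_sub, hf]
  rw [ZMod.sum_univ_eq_sum_range, range_eq_Ico, sum_eq_sum_Ico_succ_bot (by omega),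
    ← sum_Ico_consecutive _ (by omega : 1 ≤ M + 1) (by omega : M + 1 ≤ N), hreflect,
    ← Ico_add_one_right_eq_Icc, Nat.cast_zero, two_nsmul]

section QuadraticGaussSum

variable {F R : Type*} [Field F] [Fintype F] [DecidableEq F] [CommRing R]

theorem sum_comp_sq_eq_sum_quadraticChar_add_one_mul (hF : ringChar F ≠ 2) (f : F → R) :
    ∑ x, f (x ^ 2) = ∑ t, ((quadraticChar F t : R) + 1) * f t := by
  rw [← sum_fiberwise univ (· ^ 2) (fun x => f (x ^ 2))]
  refine sum_congr rfl fun t _ => ?_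
  have hcard : (#{x : F | x ^ 2 = t} : ℤ) = quadraticChar F t + 1 := by
    simpa [Set.toFinset_ofPred] using quadraticChar_card_sqrts hF t
  rw [sum_congr rfl fun x hx => by rw [(mem_filter.mp hx).2], sum_const, nsmul_eq_mul,
    ← Int.cast_natCast, hcard, Int.cast_add, Int.cast_one]

variable [IsDomain R]

theorem sq_sum_addChar_mul_sq (hF : ringChar F ≠ 2) (hR : ringChar R ≠ 2) {ψ : AddChar F R}
    (hψ : ψ.IsPrimitive) {d : F} (hd : d ≠ 0) :
    (∑ x, ψ (d * x ^ 2)) ^ 2 = quadraticChar F (-1) * Fintype.card F := by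
  set χ := (quadraticChar F).ringHomComp (Int.castRingHom R)
  have hχ₁ : χ ≠ 1 := by
    obtain ⟨a, ha⟩ := quadraticChar_exists_neg_one' hF
    refine MulChar.ne_one_iff.mpr ⟨a, ?_⟩
    simpa [χ, MulChar.ringHomComp_apply, ha] using Ring.neg_one_ne_one_of_char_ne_two hR
  have hχd : χ d ^ 2 = 1 := by
    rw [MulChar.ringHomComp_apply, ← map_pow, quadraticChar_sq_one hd, map_one]
  have hsum : ∑ x, ψ (d * x ^ 2) = gaussSum χ (ψ.mulShift d) := by
    have hzero : ∑ x, ψ (d * x) = 0 := AddChar.sum_eq_zero_of_ne_one (hψ hd)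
    rw [sum_comp_sq_eq_sum_quadraticChar_add_one_mul hF (fun t => ψ (d * t))]
    simp only [add_mul, one_mul, sum_add_distrib, hzero, add_zero]
    rfl
  have hshift : χ d * gaussSum χ (ψ.mulShift d) = gaussSum χ ψ :=
    gaussSum_mulShift χ ψ (Units.mk0 d hd)
  calc (∑ x, ψ (d * x ^ 2)) ^ 2 = χ d ^ 2 * gaussSum χ (ψ.mulShift d) ^ 2 := by
        rw [hχd, one_mul, hsum]
    _ = gaussSum χ ψ ^ 2 := by rw [← hshift, mul_pow]
    _ = quadraticChar F (-1) * Fintype.card F :=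
        gaussSum_sq hχ₁ ((quadraticChar_isQuadratic F).comp _) hψ

end QuadraticGaussSum

theorem ZMod.norm_sum_Icc_stdAddChar_mul_sq {N M : ℕ} [Fact N.Prime] (h4 : N % 4 = 3)
    (hM : 2 * M + 1 = N) {d : ZMod N} (hd : d ≠ 0) :
    ‖∑ m ∈ Icc 1 M, stdAddChar (d * (m : ZMod N) ^ 2)‖ = √(N + 1) / 2 := by
  have hN2 : ringChar (ZMod N) ≠ 2 := by rw [ZMod.ringChar_zmod_n]; omega
  have hneg : quadraticChar (ZMod N) (-1) = -1 :=
    quadraticChar_neg_one_iff_not_isSquare.mpr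
      (FiniteField.isSquare_neg_one_iff.not_left.mpr (by rwa [ZMod.card]))
  have hsq : (∑ x, stdAddChar (d * x ^ 2)) ^ 2 = -(N : ℂ) := by
    rw [sq_sum_addChar_mul_sq hN2 (by simp [ringChar.eq_zero]) (isPrimitive_stdAddChar N) hd,
      hneg, ZMod.card]
    simp
  have hhalf := ZMod.sum_eq_add_two_nsmul_sum_Icc_of_neg hM
    (f := fun x => stdAddChar (d * x ^ 2)) (fun x => by rw [neg_sq])
  simp only [mul_zero, zero_pow two_ne_zero, AddChar.map_zero_eq_one, two_nsmul] at hhalf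
  have hnorm := Complex.norm_sub_one_of_sq_eq_neg_ofReal (Nat.cast_nonneg N) hsq
  rw [hhalf, add_sub_cancel_left, ← two_mul, norm_mul, Complex.norm_two] at hnorm
  linarith

theorem norm_sum_Icc_exp_mul_sq {N M : ℕ} [Fact N.Prime] (h4 : N % 4 = 3)
    (hM : 2 * M + 1 = N) {k : ℤ} (hk : (k : ZMod N) ≠ 0) :
    ‖∑ m ∈ Icc 1 M, cexp (2 * π * I * k * (m : ℂ) ^ 2 / N)‖ = √(N + 1) / 2 := by
  rw [← ZMod.norm_sum_Icc_stdAddChar_mul_sq h4 hM hk]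
  refine congrArg _ (sum_congr rfl fun m _ => ?_)
  rw [← Int.cast_natCast (R := ZMod N) m, ← Int.cast_pow, ← Int.cast_mul, ZMod.stdAddChar_coe]
  push_cast
  ring_nf

theorem coherence_partial_fourier_general
    (N M p : ℕ) (hN : N.Prime) (h4 : N % 4 = 3)
    (hM : M = (N - 1) / 2) (hcop : Nat.Coprime p N) :
    IsGreatest
      { μ : ℝ | ∃ n n' : ℕ, n ∈ Finset.Icc 1 N ∧ n' ∈ Finset.Icc 1 N ∧ n ≠ n' ∧
          μ = (1 / (M : ℝ)) * ‖∑ m ∈ Finset.Icc 1 M,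
            Complex.exp (2 * Real.pi * Complex.I * (p : ℂ) * (m : ℂ) ^ 2 *
              ((n : ℂ) - (n' : ℂ)) / (N : ℂ))‖ }
      (Real.sqrt (M + 1) / (Real.sqrt 2 * M)) := by
  have : Fact N.Prime := ⟨hN⟩
  have h2M : 2 * M + 1 = N := by omega
  have hscale : 1 / (M : ℝ) * (√(N + 1) / 2) = √(M + 1) / (√2 * M) := by
    have hM0 : (M : ℝ) ≠ 0 := by norm_cast; omega
    rw [← h2M, show ((2 * M + 1 : ℕ) : ℝ) + 1 = 2 * (M + 1) by push_cast; ring,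
      Real.sqrt_mul zero_le_two]
    field_simp
    rw [Real.sq_sqrt zero_le_two]
  have hval (n : ℕ) (hn : n ∈ Icc 1 N) (n' : ℕ) (hn' : n' ∈ Icc 1 N) (hne : n ≠ n') :
      (1 / (M : ℝ)) * ‖∑ m ∈ Icc 1 M, cexp (2 * π * I * p * (m : ℂ) ^ 2 * (n - n') / N)‖ =
        √(M + 1) / (√2 * M) := by
    rw [mem_Icc] at hn hn'
    have hk : ((p * (n - n') : ℤ) : ZMod N) ≠ 0 := by
      push_cast
      exact mul_ne_zero (ZMod.unitOfCoprime p hcop).ne_zero <| by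
        exact_mod_cast ZMod.intCast_ne_zero_of_abs_lt (a := n - n') (by omega)
          (abs_lt.mpr ⟨by omega, by omega⟩)
    rw [← hscale, ← norm_sum_Icc_exp_mul_sq h4 h2M hk]
    refine congrArg _ (congrArg _ (sum_congr rfl fun m _ => ?_))
    push_cast
    ring_nf
  refine ⟨⟨2, 1, by simp; omega, by simp; omega, by omega, (hval 2 (by simp; omega) 1
    (by simp; omega) (by omega)).symm⟩, ?_⟩
  rintro μ ⟨n, n', hn, hn', hne, rfl⟩
  exact (hval n hn n' hn' hne).le

/-- Let `N` be a prime with `N ≡ 3 (mod 4)`, `M = (N−1)/2`, and `p` a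
positive integer coprime to `N`. For the `M × N` matrix with entries
`A[m,n] = exp(2πi·p·m²·n/N)`, the coherence
`μ(A) = max_{1 ≤ n ≠ n' ≤ N} (1/M)·|∑_{m=1}^{M} exp(2πi·p·m²·(n−n')/N)|`
equals `√(M+1)/(√2·M)`. -/
theorem coherence_partial_fourier
    (N M p : ℕ) (hN : N.Prime) (h4 : N % 4 = 3)
    (hM : M = (N - 1) / 2) (hp : 0 < p) (hcop : Nat.Coprime p N) :
    IsGreatest
      { μ : ℝ | ∃ n n' : ℕ, n ∈ Finset.Icc 1 N ∧ n' ∈ Finset.Icc 1 N ∧ n ≠ n' ∧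
          μ = (1 / (M : ℝ)) * ‖∑ m ∈ Finset.Icc 1 M,
            Complex.exp (2 * Real.pi * Complex.I * (p : ℂ) * (m : ℂ) ^ 2 *
              ((n : ℂ) - (n' : ℂ)) / (N : ℂ))‖ }
      (Real.sqrt (M + 1) / (Real.sqrt 2 * M)) :=
  coherence_partial_fourier_general N M p hN h4 hM hcop
end

section
/- Let Φ be an M×N complex matrix satisfying the (k, δ)-restricted isometry property: (1−δ)·‖x‖₂² ≤ ‖Φx‖₂² ≤ (1+δ)·‖x‖₂² for all k-sparse complex vectors x ∈ ℂ^N. Let Φ' be the 2M×2N real matrix obtained from Φ by replacing each entry a + i·b by the 2×2 real block [[a, −b], [b, a]]. Then Φ' satisfies the (k, δ)-restricted isometry property for all k-sparse real vectors in ℝ^{2N}: (1−δ)·‖x‖₂² ≤ ‖Φ'x‖₂² ≤ (1+δ)·‖x‖₂² for every x ∈ ℝ^{2N} with at most k nonzero entries. -/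
open Matrix

/-- The 2×2 real block `[[a, −b], [b, a]]` representing the complex number `a + i·b`. -/
def Complex.realBlock (z : ℂ) : Matrix (Fin 2) (Fin 2) ℝ :=
  !![z.re, -z.im; z.im, z.re]

/-- The `2M × 2N` real matrix obtained from an `M × N` complex matrix by replacing
each entry `a + i·b` by the 2×2 real block `[[a, −b], [b, a]]`. -/
def Matrix.realRep {M N : ℕ} (Φ : Matrix (Fin M) (Fin N) ℂ) :
    Matrix (Fin M × Fin 2) (Fin N × Fin 2) ℝ :=
  fun p q => (Φ p.1 q.1).realBlock p.2 q.2

/-!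
Reading a real vector indexed by `Fin N × Fin 2` as the complex vector `z n = x (n, 0) + i·x (n, 1)`
turns `Φ.realRep` into `Φ`, preserves the Euclidean norm, and does not increase the number of
nonzero entries. So every `k`-sparse real test vector for `Φ.realRep` yields a `k`-sparse complex
test vector for `Φ` with the same two norms.
-/

def complexify {ι : Type*} (x : ι × Fin 2 → ℝ) : ι → ℂ :=
  fun n => ⟨x (n, 0), x (n, 1)⟩

theorem sq_norm_complexify {ι : Type*} (x : ι × Fin 2 → ℝ) (n : ι) :
    ‖complexify x n‖ ^ 2 = ∑ i : Fin 2, ‖x (n, i)‖ ^ 2 := by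
  rw [Complex.sq_norm, Complex.normSq_apply, Fin.sum_univ_two]
  simp [complexify, sq]

theorem sum_sq_norm_complexify {ι : Type*} [Fintype ι] (x : ι × Fin 2 → ℝ) :
    ∑ n, ‖complexify x n‖ ^ 2 = ∑ p, ‖x p‖ ^ 2 := by
  simp only [sq_norm_complexify, Fintype.sum_prod_type]

theorem card_support_complexify_le {ι : Type*} [Fintype ι] [DecidableEq ι]
    (x : ι × Fin 2 → ℝ) :
    (Finset.univ.filter fun n => complexify x n ≠ 0).card ≤
      (Finset.univ.filter fun p => x p ≠ 0).card := by
  have hsub : (Finset.univ.filter fun n => complexify x n ≠ 0) ⊆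
      (Finset.univ.filter fun p => x p ≠ 0).image Prod.fst := by
    intro n hn
    simp only [Finset.mem_filter, Finset.mem_univ, true_and, Finset.mem_image] at hn ⊢
    by_cases h0 : x (n, 0) = 0
    · exact ⟨(n, 1), fun h1 => hn (Complex.ext h0 h1), rfl⟩
    · exact ⟨(n, 0), h0, rfl⟩
  exact (Finset.card_le_card hsub).trans Finset.card_image_le

theorem complexify_realRep_mulVec {M N : ℕ} (Φ : Matrix (Fin M) (Fin N) ℂ)
    (x : Fin N × Fin 2 → ℝ) : complexify (Φ.realRep *ᵥ x) = Φ *ᵥ complexify x := by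
  funext m
  apply Complex.ext <;>
  · simp only [complexify, mulVec, dotProduct, Matrix.realRep, Complex.realBlock,
      Fintype.sum_prod_type, Fin.sum_univ_two, Complex.re_sum, Complex.im_sum,
      Complex.mul_re, Complex.mul_im]
    refine Finset.sum_congr rfl fun n _ => ?_
    simp only [of_apply, cons_val_zero, cons_val_one, cons_val_fin_one, neg_mul]
    ring

/-- If an `M × N` complex matrix `Φ` satisfies the `(k, δ)`-restricted
isometry property for all `k`-sparse complex vectors, then its `2M × 2N` real
representation `Φ'` (each entry `a + i·b` replaced by `[[a, −b], [b, a]]`)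
satisfies the `(k, δ)`-restricted isometry property for all `k`-sparse real vectors. -/
theorem realRep_restricted_isometry
    {M N : ℕ} (k : ℕ) (δ : ℝ) (Φ : Matrix (Fin M) (Fin N) ℂ)
    (hRIP : ∀ x : Fin N → ℂ,
      (Finset.univ.filter fun n => x n ≠ 0).card ≤ k →
        (1 - δ) * ∑ n, ‖x n‖ ^ 2 ≤ ∑ m, ‖Φ.mulVec x m‖ ^ 2 ∧
        ∑ m, ‖Φ.mulVec x m‖ ^ 2 ≤ (1 + δ) * ∑ n, ‖x n‖ ^ 2) :
    ∀ x : Fin N × Fin 2 → ℝ,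
      (Finset.univ.filter fun n => x n ≠ 0).card ≤ k →
        (1 - δ) * ∑ n, ‖x n‖ ^ 2 ≤ ∑ m, ‖Φ.realRep.mulVec x m‖ ^ 2 ∧
        ∑ m, ‖Φ.realRep.mulVec x m‖ ^ 2 ≤ (1 + δ) * ∑ n, ‖x n‖ ^ 2 := by
  intro x hx
  have hRIPx := hRIP (complexify x) ((card_support_complexify_le x).trans hx)
  rwa [← complexify_realRep_mulVec, sum_sq_norm_complexify, sum_sq_norm_complexify] at hRIPx
end
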